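/- arXiv:1703.08728 — 2 statements merged into one kernel-verified Lean document; each statement's English description precedes it below -/
import Mathlib

section
/- Let G be a simple connected graph with n vertices, m edges, minimum degree δ, and adjacency spectral radius ϱ(G). Then ϱ(G) ≤ (δ-1)/2 + sqrt(2m - nδ + (δ+1)²/4). -/
open SimpleGraph Matrix Polynomial Real

/-- The characteristic polynomial of the adjacency matrix of a finite simple graph. -/
noncomputable def adjCharpoly {V : Type*} [Fintype V] (G : SimpleGraph V) : Polynomial ℝ :=
  letI := Classical.decEq V
  letI : DecidableRel G.Adj := Classical.decRel _
  ((G.adjMatrix ℝ).charpoly)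

/-- The adjacency spectrum of a finite simple graph: the multiset of real roots of the
characteristic polynomial of its adjacency matrix (with multiplicity). -/
noncomputable def adjSpectrum {V : Type*} [Fintype V] (G : SimpleGraph V) : Multiset ℝ :=
  (adjCharpoly G).roots

/-- The Laplacian spectrum of a finite simple graph (with multiplicity). -/
noncomputable def lapSpectrum {V : Type*} [Fintype V] (G : SimpleGraph V) : Multiset ℝ :=
  letI := Classical.decEq V
  letI : DecidableRel G.Adj := Classical.decRel _
  ((G.lapMatrix ℝ).charpoly).roots

/-- The adjacency spectral radius: the largest adjacency eigenvalue. -/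
noncomputable def specRadius {V : Type*} [Fintype V] (G : SimpleGraph V) : ℝ :=
  sSup {x : ℝ | x ∈ adjSpectrum G}

/-- The join `G ∇ H` of two graphs: disjoint union plus all cross edges. -/
def graphJoin {α β : Type*} (G : SimpleGraph α) (H : SimpleGraph β) :
    SimpleGraph (α ⊕ β) where
  Adj x y :=
    match x, y with
    | Sum.inl a, Sum.inl b => G.Adj a b
    | Sum.inr a, Sum.inr b => H.Adj a b
    | Sum.inl _, Sum.inr _ => True
    | Sum.inr _, Sum.inl _ => True
  symm := ⟨by
    rintro (a | a) (b | b) h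
    · exact G.adj_symm h
    · trivial
    · trivial
    · exact H.adj_symm h⟩
  loopless := ⟨by
    rintro (a | a) h
    · exact G.irrefl h
    · exact H.irrefl h⟩

/-- `m` disjoint copies of the cycle `Cₙ`. -/
def mCycles (m n : ℕ) : SimpleGraph (Fin m × Fin n) where
  Adj x y := x.1 = y.1 ∧ (cycleGraph n).Adj x.2 y.2
  symm := ⟨by rintro ⟨i, a⟩ ⟨j, b⟩ ⟨h1, h2⟩; exact ⟨h1.symm, h2.symm⟩⟩
  loopless := ⟨by rintro ⟨i, a⟩ ⟨_, h⟩; exact (cycleGraph n).irrefl h⟩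

/-- The multicone graph `K_w ∇ m·Cₙ`. -/
def multicone (w m n : ℕ) : SimpleGraph (Fin w ⊕ (Fin m × Fin n)) :=
  graphJoin (completeGraph (Fin w)) (mCycles m n)

/-! The spectral radius `ρ` of `G` has a nonnegative eigenvector `x`: maximize the quadratic form
of the adjacency matrix `A` on the unit sphere and replace a maximizer by its entrywise absolute
value, which is again a maximizer because `A ≥ 0`. Pairing `A²x = ρ²x` with the all-ones vector and
using symmetry gives `ρ² ∑ x = ∑_v x_v ∑_{u ∼ v} d_u`. The vertices outside the closed neighbourhood
of `v` have degree at least `δ`, so `∑_{u ∼ v} d_u ≤ 2m - (n - 1)δ + (δ - 1)d_v`, and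
`∑_v d_v x_v = ρ ∑ x`. Hence `ρ² ≤ 2m - (n - 1)δ + (δ - 1)ρ`, and solving this quadratic
inequality gives the bound. -/

open Finset

namespace Matrix

variable {n : Type*} [Fintype n]

lemma dotProduct_self_pos {x : n → ℝ} (hx : x ≠ 0) : 0 < x ⬝ᵥ x := by
  simpa using dotProduct_self_star_pos_iff.mpr hx

lemma IsSymm.dotProduct_mulVec_comm {R : Type*} [CommSemiring R] {A : Matrix n n R}
    (hA : A.IsSymm) (v w : n → R) : v ⬝ᵥ A *ᵥ w = A *ᵥ v ⬝ᵥ w := by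
  rw [dotProduct_mulVec, ← mulVec_transpose, hA.eq]

lemma abs_dotProduct_abs (x : n → ℝ) : |x| ⬝ᵥ |x| = x ⬝ᵥ x := by
  simp [dotProduct, abs_mul_abs_self]

lemma dotProduct_mulVec_le_abs {A : Matrix n n ℝ} (hA : ∀ i j, 0 ≤ A i j) (x : n → ℝ) :
    x ⬝ᵥ A *ᵥ x ≤ |x| ⬝ᵥ A *ᵥ |x| := by
  simp only [dotProduct, mulVec, Pi.abs_apply, mul_sum]
  refine sum_le_sum fun i _ => sum_le_sum fun j _ => ?_
  rw [mul_left_comm, mul_left_comm |x i|, ← abs_mul]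
  exact mul_le_mul_of_nonneg_left (le_abs_self _) (hA i j)

lemma isCompact_setOf_dotProduct_self_eq_one : IsCompact {x : n → ℝ | x ⬝ᵥ x = 1} := by
  refine (isCompact_univ_pi fun _ => isCompact_Icc (a := -1) (b := 1)).of_isClosed_subset
    (isClosed_eq (by simp only [dotProduct]; fun_prop) continuous_const) fun x hx i _ => ?_
  have : x i * x i ≤ x ⬝ᵥ x := single_le_sum (f := fun j => x j * x j)
    (fun j _ => mul_self_nonneg (x j)) (mem_univ i)
  change x ⬝ᵥ x = 1 at hx
  exact abs_le.mp (abs_le_one_iff_mul_self_le_one.mpr (hx ▸ this))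

lemma exists_forall_dotProduct_mulVec_le_mul [Nonempty n] (A : Matrix n n ℝ) :
    ∃ y : n → ℝ, y ⬝ᵥ y = 1 ∧ ∀ x, x ⬝ᵥ A *ᵥ x ≤ (y ⬝ᵥ A *ᵥ y) * (x ⬝ᵥ x) := by
  classical
  obtain ⟨i⟩ := ‹Nonempty n›
  have hcont : Continuous fun x : n → ℝ => x ⬝ᵥ A *ᵥ x := by
    simp only [dotProduct, mulVec]; fun_prop
  obtain ⟨y, hy, hmax⟩ := isCompact_setOf_dotProduct_self_eq_one.exists_isMaxOn
    ⟨Pi.single i 1, by simp⟩ hcont.continuousOn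
  refine ⟨y, hy, fun x => ?_⟩
  rcases eq_or_ne x 0 with rfl | hx
  · simp
  obtain ⟨s, hs, hxs⟩ : ∃ s : ℝ, 0 < s ∧ x ⬝ᵥ x = s ^ 2 :=
    ⟨√(x ⬝ᵥ x), Real.sqrt_pos.mpr (dotProduct_self_pos hx),
      (Real.sq_sqrt (dotProduct_self_pos hx).le).symm⟩
  have hunit : s⁻¹ • x ∈ {x : n → ℝ | x ⬝ᵥ x = 1} := by
    change _ = _
    rw [smul_dotProduct, dotProduct_smul, hxs, smul_eq_mul, smul_eq_mul]
    field_simp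
  have hscaled := mul_le_mul_of_nonneg_right (hmax hunit) (sq_nonneg s)
  simp only [mulVec_smul, smul_dotProduct, dotProduct_smul, smul_eq_mul] at hscaled
  calc x ⬝ᵥ A *ᵥ x = s⁻¹ * (s⁻¹ * x ⬝ᵥ A *ᵥ x) * s ^ 2 := by field_simp
    _ ≤ _ := hscaled
    _ = _ := by rw [hxs]

lemma IsSymm.mulVec_eq_smul_of_dotProduct_mulVec_le {A : Matrix n n ℝ} (hA : A.IsSymm) {ρ : ℝ}
    (hle : ∀ x, x ⬝ᵥ A *ᵥ x ≤ ρ * (x ⬝ᵥ x)) {y : n → ℝ} (hy : y ⬝ᵥ A *ᵥ y = ρ * (y ⬝ᵥ y)) :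
    A *ᵥ y = ρ • y := by
  set r := ρ • y - A *ᵥ y with hr
  have hrr : r ⬝ᵥ r = ρ * (r ⬝ᵥ y) - r ⬝ᵥ A *ᵥ y := by
    rw [hr, dotProduct_sub, dotProduct_smul, smul_eq_mul, ← hr]
  have hsymm : y ⬝ᵥ A *ᵥ r = r ⬝ᵥ A *ᵥ y := by
    rw [hA.dotProduct_mulVec_comm, dotProduct_comm]
  -- `t ↦ ρ ‖y + t r‖² - (y + t r) ⬝ A (y + t r)` is a nonnegative quadratic vanishing at `0`
  -- with slope `2 ‖r‖²` there, so `r = 0`.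
  have hquad : ∀ t : ℝ, 0 ≤ (ρ * (r ⬝ᵥ r) - r ⬝ᵥ A *ᵥ r) * (t * t) + 2 * (r ⬝ᵥ r) * t + 0 := by
    intro t
    have := hle (y + t • r)
    simp only [add_dotProduct, dotProduct_add, mulVec_add, mulVec_smul, smul_dotProduct,
      dotProduct_smul, smul_eq_mul] at this
    rw [dotProduct_comm y r] at this
    linear_combination this - 2 * t * hrr - t * hsymm - hy
  have hdisc := discrim_le_zero hquad
  rw [discrim] at hdisc
  have : r ⬝ᵥ r = 0 := by nlinarith
  exact (sub_eq_zero.mp (dotProduct_self_eq_zero.mp this)).symm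

lemma mem_roots_charpoly_iff {K : Type*} [Field K] [DecidableEq n] {A : Matrix n n K} {μ : K} :
    μ ∈ A.charpoly.roots ↔ ∃ x ≠ 0, A *ᵥ x = μ • x := by
  rw [Polynomial.mem_roots A.charpoly_monic.ne_zero, ← charpoly_toLin',
    ← Module.End.hasEigenvalue_iff_isRoot_charpoly]
  constructor
  · intro h
    obtain ⟨x, hx⟩ := h.exists_hasEigenvector
    exact ⟨x, hx.2, by simpa using hx.apply_eq_smul⟩
  · rintro ⟨x, hx, h⟩
    exact Module.End.hasEigenvalue_of_hasEigenvector
      ⟨Module.End.mem_eigenspace_iff.mpr (by simpa using h), hx⟩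

lemma IsSymm.exists_nonneg_eigenvector_isGreatest [DecidableEq n] [Nonempty n]
    {A : Matrix n n ℝ} (hA : A.IsSymm) (hA0 : ∀ i j, 0 ≤ A i j) :
    ∃ ρ : ℝ, ∃ y : n → ℝ, IsGreatest {μ | μ ∈ A.charpoly.roots} ρ ∧
      0 ≤ y ∧ y ≠ 0 ∧ A *ᵥ y = ρ • y := by
  obtain ⟨y, hy1, hle⟩ := exists_forall_dotProduct_mulVec_le_mul A
  set ρ := y ⬝ᵥ A *ᵥ y
  have hy : |y| ≠ 0 := fun h => by
    simpa [h, hy1] using abs_dotProduct_abs y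
  have hAy : A *ᵥ |y| = ρ • |y| := by
    refine hA.mulVec_eq_smul_of_dotProduct_mulVec_le hle (le_antisymm ?_ ?_)
    · exact hle |y|
    · rw [abs_dotProduct_abs, hy1, mul_one]
      exact dotProduct_mulVec_le_abs hA0 y
  refine ⟨ρ, |y|, ⟨mem_roots_charpoly_iff.mpr ⟨|y|, hy, hAy⟩, fun μ hμ => ?_⟩, abs_nonneg y, hy, hAy⟩
  obtain ⟨w, hw, hAw⟩ := mem_roots_charpoly_iff.mp hμ
  have hμw := hle w
  rw [hAw, dotProduct_smul, smul_eq_mul] at hμw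
  exact le_of_mul_le_mul_right hμw (dotProduct_self_pos hw)

lemma IsSymm.sq_le_of_mulVec_mulVec_one_le {A : Matrix n n ℝ} (hA : A.IsSymm) {ρ b c : ℝ}
    {x : n → ℝ} (hx0 : 0 ≤ x) (hx : x ≠ 0) (hAx : A *ᵥ x = ρ • x)
    (h : A *ᵥ (A *ᵥ 1) ≤ c • 1 + b • (A *ᵥ 1)) : ρ ^ 2 ≤ c + b * ρ := by
  have hS : 0 < 1 ⬝ᵥ x := by
    obtain ⟨i, hi⟩ := Function.ne_iff.mp hx
    rw [one_dotProduct]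
    exact sum_pos' (fun j _ => hx0 j) ⟨i, mem_univ i, lt_of_le_of_ne (hx0 i) (Ne.symm hi)⟩
  refine le_of_mul_le_mul_right ?_ hS
  calc ρ ^ 2 * (1 ⬝ᵥ x) = 1 ⬝ᵥ A *ᵥ (A *ᵥ x) := by
        rw [hAx, mulVec_smul, hAx, dotProduct_smul, dotProduct_smul, smul_eq_mul, smul_eq_mul]
        ring
    _ = A *ᵥ (A *ᵥ 1) ⬝ᵥ x := by rw [hA.dotProduct_mulVec_comm, hA.dotProduct_mulVec_comm]
    _ ≤ (c • 1 + b • (A *ᵥ 1)) ⬝ᵥ x := dotProduct_le_dotProduct_of_nonneg_right h hx0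
    _ = (c + b * ρ) * (1 ⬝ᵥ x) := by
        rw [add_dotProduct, smul_dotProduct, smul_dotProduct, ← hA.dotProduct_mulVec_comm, hAx,
          dotProduct_smul, smul_eq_mul, smul_eq_mul, smul_eq_mul]
        ring

end Matrix

lemma Real.le_div_two_add_sqrt_of_sq_le {x b c : ℝ} (h : x ^ 2 ≤ c + b * x) :
    x ≤ b / 2 + √(c + b ^ 2 / 4) := by
  have : |x - b / 2| ≤ √(c + b ^ 2 / 4) := Real.abs_le_sqrt (by linear_combination h)
  linarith [le_abs_self (x - b / 2)]

namespace SimpleGraph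

variable {V : Type*} [Fintype V] (G : SimpleGraph V) [DecidableRel G.Adj]

lemma adjCharpoly_eq_charpoly_adjMatrix [DecidableEq V] :
    adjCharpoly G = (G.adjMatrix ℝ).charpoly := by
  unfold adjCharpoly
  congr!

lemma exists_nonneg_adjMatrix_mulVec_eq_specRadius_smul [Nonempty V] :
    ∃ x : V → ℝ, 0 ≤ x ∧ x ≠ 0 ∧ G.adjMatrix ℝ *ᵥ x = specRadius G • x := by
  classical
  obtain ⟨ρ, x, hρ, hx⟩ := G.isSymm_adjMatrix.exists_nonneg_eigenvector_isGreatest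
    fun i j => by rw [adjMatrix_apply]; split_ifs <;> norm_num
  rw [specRadius, adjSpectrum, adjCharpoly_eq_charpoly_adjMatrix, hρ.csSup_eq]
  exact ⟨x, hx⟩

lemma adjMatrix_mulVec_one : G.adjMatrix ℝ *ᵥ 1 = fun v => (G.degree v : ℝ) := by
  ext v
  simp [adjMatrix_mulVec_apply]

lemma sum_degree_neighborFinset_le (v : V) :
    ∑ u ∈ G.neighborFinset v, (G.degree u : ℝ) ≤
      2 * #G.edgeFinset - (Fintype.card V - 1) * G.minDegree + (G.minDegree - 1) * G.degree v := by
  classical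
  set s := insert v (G.neighborFinset v)
  have hv : v ∉ G.neighborFinset v := by simp
  have hsum : ∑ u ∈ sᶜ, (G.degree u : ℝ) + (G.degree v + ∑ u ∈ G.neighborFinset v, (G.degree u : ℝ))
      = 2 * #G.edgeFinset := by
    rw [← sum_insert (f := fun u => (G.degree u : ℝ)) hv, sum_compl_add_sum]
    exact_mod_cast G.sum_degrees_eq_twice_card_edges
  have hcard : (#sᶜ : ℝ) = Fintype.card V - (G.degree v + 1) := by
    rw [card_compl, card_insert_of_notMem hv, card_neighborFinset_eq_degree,
      Nat.cast_sub (G.degree_lt_card_verts v)]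
    push_cast
    ring
  have hmin : #sᶜ • (G.minDegree : ℝ) ≤ ∑ u ∈ sᶜ, (G.degree u : ℝ) :=
    card_nsmul_le_sum _ _ _ fun u _ => by exact_mod_cast G.minDegree_le_degree u
  rw [nsmul_eq_mul, hcard] at hmin
  linarith

lemma adjMatrix_mulVec_adjMatrix_mulVec_one_le :
    G.adjMatrix ℝ *ᵥ (G.adjMatrix ℝ *ᵥ 1) ≤
      (2 * #G.edgeFinset - (Fintype.card V - 1) * G.minDegree : ℝ) • 1 +
        (G.minDegree - 1 : ℝ) • (G.adjMatrix ℝ *ᵥ 1) := fun v => by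
  simpa [adjMatrix_mulVec_one, adjMatrix_mulVec_apply] using G.sum_degree_neighborFinset_le v

end SimpleGraph

theorem specRadius_le_general {V : Type*} [Fintype V] [Nonempty V]
    (G : SimpleGraph V) [DecidableRel G.Adj] :
    specRadius G ≤ ((G.minDegree : ℝ) - 1) / 2 +
      Real.sqrt (2 * G.edgeFinset.card - Fintype.card V * G.minDegree +
        ((G.minDegree : ℝ) + 1) ^ 2 / 4) := by
  obtain ⟨x, hx0, hx, hAx⟩ := G.exists_nonneg_adjMatrix_mulVec_eq_specRadius_smul
  have hquad := G.isSymm_adjMatrix.sq_le_of_mulVec_mulVec_one_le hx0 hx hAx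
    G.adjMatrix_mulVec_adjMatrix_mulVec_one_le
  convert Real.le_div_two_add_sqrt_of_sq_le hquad using 3
  ring

/-- For a connected graph `G` with `n` vertices, `m` edges and minimum degree `δ`,
`ϱ(G) ≤ (δ-1)/2 + √(2m - nδ + (δ+1)²/4)`. -/
theorem specRadius_le {V : Type*} [Fintype V] [Nonempty V] [DecidableEq V]
    (G : SimpleGraph V) [DecidableRel G.Adj] (hG : G.Connected) :
    specRadius G ≤ ((G.minDegree : ℝ) - 1) / 2 +
      Real.sqrt (2 * G.edgeFinset.card - Fintype.card V * G.minDegree +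
        ((G.minDegree : ℝ) + 1) ^ 2 / 4) :=
  specRadius_le_general G
end

section
/- Let Γ be a connected non-regular graph with exactly three distinct adjacency eigenvalues θ₀ > θ₁ > θ₂. Then θ₁ ≥ 0, with equality if and only if Γ is complete bipartite. -/
open SimpleGraph Matrix Polynomial Real

/-!
Let `A` be the adjacency matrix and `n = |V|`. By Perron–Frobenius, `θ₀` is simple with a positive
eigenvector `w`, so `xᵀAx ≤ θ₁ xᵀx` whenever `x ⊥ w`. For distinct non-adjacent `u, v` the vector
`x = w_v e_u - w_u e_v` is orthogonal to `w` and has `xᵀAx = 0`; if `θ₁ < 0` this is impossible, so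
`Γ` would be complete, hence regular.

If `θ₁ = 0`, such an `x` even lies in the kernel of `A`, so non-adjacent vertices are twins and
every vertex is adjacent to at least one end of each edge. The minimal polynomial gives
`A (A - θ₂ I) = α αᵀ` with `α` a positive multiple of `w`: thus `deg u = α_u²` and
`α_u² + α_v² - α_u α_v = n + θ₂` on every edge `uv`. On a triangle these force equal `α`-values,
which would make `Γ` regular; so `Γ` is triangle-free and therefore complete bipartite.
Conversely, a complete bipartite graph on at least three vertices has twins, so `0` is an
eigenvalue; as `tr A = 0` forces `θ₂ < 0`, that eigenvalue is `θ₁`.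
-/

namespace Matrix

variable {n : Type*} [Fintype n]

structure IsPerronVector (A : Matrix n n ℝ) (θ : ℝ) (w : n → ℝ) : Prop where
  pos : ∀ i, 0 < w i
  mulVec_eq : A *ᵥ w = θ • w
  exists_eq_smul : ∀ x, A *ᵥ x = θ • x → ∃ c : ℝ, x = c • w

variable [DecidableEq n]

theorem mem_spectrum_iff_exists_mulVec_eq_smul {K : Type*} [Field K] {A : Matrix n n K} {μ : K} :
    μ ∈ spectrum K A ↔ ∃ x ≠ 0, A *ᵥ x = μ • x := by
  rw [spectrum.mem_iff, isUnit_iff_isUnit_det, isUnit_iff_ne_zero, not_not,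
    ← exists_mulVec_eq_zero_iff]
  simp [sub_mulVec, sub_eq_zero, Algebra.algebraMap_eq_smul_one, smul_mulVec, eq_comm]

theorem dotProduct_eq_zero_of_mulVec_eq_smul {A : Matrix n n ℝ} {θ θ₀ μ : ℝ} {w x y : n → ℝ}
    (hgap : ∀ ν ∈ spectrum ℝ A, θ < ν → ν = θ₀) (hw : ∀ z, A *ᵥ z = θ₀ • z → ∃ c : ℝ, z = c • w)
    (hx : w ⬝ᵥ x = 0) (hy : A *ᵥ y = μ • y) (hμ : θ < μ) : y ⬝ᵥ x = 0 := by
  rcases eq_or_ne y 0 with rfl | hy0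
  · exact zero_dotProduct x
  obtain rfl := hgap μ (mem_spectrum_iff_exists_mulVec_eq_smul.2 ⟨y, hy0, hy⟩) hμ
  obtain ⟨c, rfl⟩ := hw y hy
  rw [smul_dotProduct, hx, smul_zero]

namespace IsHermitian

variable {A : Matrix n n ℝ}

theorem eq_sum_eigenvectorBasis (hA : A.IsHermitian) (x : n → ℝ) :
    x = ∑ i, (⇑(hA.eigenvectorBasis i) ⬝ᵥ x) • ⇑(hA.eigenvectorBasis i) := by
  have := congrArg WithLp.ofLp (hA.eigenvectorBasis.sum_repr' (WithLp.toLp 2 x))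
  simpa [EuclideanSpace.inner_eq_star_dotProduct, dotProduct_comm] using this.symm

theorem dotProduct_eq_sum_eigenvectorBasis (hA : A.IsHermitian) (x y : n → ℝ) :
    x ⬝ᵥ y = ∑ i, (⇑(hA.eigenvectorBasis i) ⬝ᵥ x) * (⇑(hA.eigenvectorBasis i) ⬝ᵥ y) := by
  have := hA.eigenvectorBasis.sum_inner_mul_inner (WithLp.toLp 2 x) (WithLp.toLp 2 y)
  simpa [EuclideanSpace.inner_eq_star_dotProduct, dotProduct_comm] using this.symm

theorem eigenvectorBasis_dotProduct_mulVec (hA : A.IsHermitian) (x : n → ℝ) (i : n) :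
    ⇑(hA.eigenvectorBasis i) ⬝ᵥ A *ᵥ x = hA.eigenvalues i * (⇑(hA.eigenvectorBasis i) ⬝ᵥ x) := by
  rw [dotProduct_mulVec, ← mulVec_transpose, (isHermitian_iff_isSymm.1 hA).eq,
    mulVec_eigenvectorBasis, smul_dotProduct, smul_eq_mul]

theorem mul_dotProduct_sub_dotProduct_mulVec_eq_sum (hA : A.IsHermitian) (θ : ℝ) (x : n → ℝ) :
    θ * (x ⬝ᵥ x) - x ⬝ᵥ A *ᵥ x =
      ∑ i, (θ - hA.eigenvalues i) * (⇑(hA.eigenvectorBasis i) ⬝ᵥ x) ^ 2 := by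
  simp only [hA.dotProduct_eq_sum_eigenvectorBasis x, eigenvectorBasis_dotProduct_mulVec,
    Finset.mul_sum, ← Finset.sum_sub_distrib]
  congr 1 with i
  ring

section Rayleigh

variable {θ : ℝ} {x : n → ℝ}

theorem sub_eigenvalues_mul_sq_nonneg (hA : A.IsHermitian)
    (hx : ∀ (μ : ℝ) (y : n → ℝ), A *ᵥ y = μ • y → θ < μ → y ⬝ᵥ x = 0) (i : n) :
    0 ≤ (θ - hA.eigenvalues i) * (⇑(hA.eigenvectorBasis i) ⬝ᵥ x) ^ 2 := by
  rcases le_or_gt (hA.eigenvalues i) θ with hle | hlt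
  · exact mul_nonneg (sub_nonneg.2 hle) (sq_nonneg _)
  · simp [hx _ _ (hA.mulVec_eigenvectorBasis i) hlt]

theorem dotProduct_mulVec_le (hA : A.IsHermitian)
    (hx : ∀ (μ : ℝ) (y : n → ℝ), A *ᵥ y = μ • y → θ < μ → y ⬝ᵥ x = 0) :
    x ⬝ᵥ A *ᵥ x ≤ θ * (x ⬝ᵥ x) := by
  rw [← sub_nonneg, hA.mul_dotProduct_sub_dotProduct_mulVec_eq_sum]
  exact Finset.sum_nonneg fun i _ => hA.sub_eigenvalues_mul_sq_nonneg hx i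

theorem mulVec_eq_smul_of_dotProduct_mulVec_eq (hA : A.IsHermitian)
    (hx : ∀ (μ : ℝ) (y : n → ℝ), A *ᵥ y = μ • y → θ < μ → y ⬝ᵥ x = 0)
    (heq : x ⬝ᵥ A *ᵥ x = θ * (x ⬝ᵥ x)) :
    A *ᵥ x = θ • x := by
  rw [eq_comm, ← sub_eq_zero, hA.mul_dotProduct_sub_dotProduct_mulVec_eq_sum] at heq
  have hterm := (Finset.sum_eq_zero_iff_of_nonneg fun i _ =>
    hA.sub_eigenvalues_mul_sq_nonneg hx i).1 heq
  have hcoef : ∀ i, hA.eigenvalues i * (⇑(hA.eigenvectorBasis i) ⬝ᵥ x) =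
      θ * (⇑(hA.eigenvectorBasis i) ⬝ᵥ x) := fun i => by
    rcases mul_eq_zero.1 (hterm i (Finset.mem_univ i)) with h | h
    · rw [sub_eq_zero.1 h]
    · rw [pow_eq_zero_iff two_ne_zero |>.1 h, mul_zero, mul_zero]
  calc A *ᵥ x = ∑ i, (⇑(hA.eigenvectorBasis i) ⬝ᵥ A *ᵥ x) • ⇑(hA.eigenvectorBasis i) :=
        hA.eq_sum_eigenvectorBasis _
    _ = θ • ∑ i, (⇑(hA.eigenvectorBasis i) ⬝ᵥ x) • ⇑(hA.eigenvectorBasis i) := by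
        simp only [eigenvectorBasis_dotProduct_mulVec, hcoef, Finset.smul_sum, smul_smul]
    _ = θ • x := by rw [← hA.eq_sum_eigenvectorBasis]

end Rayleigh

theorem aeval_eq_zero_of_isRoot (hA : A.IsHermitian) {p : ℝ[X]}
    (hp : ∀ μ ∈ spectrum ℝ A, p.IsRoot μ) : aeval A p = 0 := by
  rw [← cfc_polynomial p A hA.isSelfAdjoint, cfc_congr (g := 0) fun μ hμ => hp μ hμ]
  exact cfc_zero ℝ A

theorem exists_sub_mul_sub_eq_smul_vecMulVec (hA : A.IsHermitian) {θ₀ θ₁ θ₂ : ℝ}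
    (hspec : spectrum ℝ A ⊆ {θ₀, θ₁, θ₂}) {w : n → ℝ}
    (hw : ∀ x, A *ᵥ x = θ₀ • x → ∃ c : ℝ, x = c • w) :
    ∃ γ : ℝ, (A - θ₁ • 1) * (A - θ₂ • 1) = γ • vecMulVec w w := by
  set B := (A - θ₁ • 1) * (A - θ₂ • 1)
  have hkill : (A - θ₀ • 1) * B = 0 := by
    have := hA.aeval_eq_zero_of_isRoot (p := (X - C θ₀) * (X - C θ₁) * (X - C θ₂)) fun μ hμ => by
      rcases hspec hμ with rfl | rfl | rfl <;> simp
    simpa [B, Algebra.algebraMap_eq_smul_one, mul_assoc] using this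
  -- Each column of `B` is a `θ₀`-eigenvector, hence a multiple of `w`; as `B` is symmetric, the
  -- multipliers are themselves proportional to `w`.
  have hcol : ∀ v, ∃ c : ℝ, ∀ u, B u v = c * w u := fun v => by
    have hB : ((A - θ₀ • 1) * B) *ᵥ (Pi.single v 1 : n → ℝ) = 0 := by rw [hkill, zero_mulVec]
    rw [← mulVec_mulVec, sub_mulVec, smul_mulVec, one_mulVec, sub_eq_zero] at hB
    obtain ⟨c, hc⟩ := hw _ hB
    exact ⟨c, fun u => by simpa using congrFun hc u⟩
  choose c hc using hcol
  have hBt : Bᵀ = B := by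
    simp only [B, transpose_mul, transpose_sub, transpose_smul, transpose_one,
      (isHermitian_iff_isSymm.1 hA).eq, sub_mul, mul_sub, smul_mul_assoc, mul_smul_comm, one_mul,
      mul_one]
  by_cases hw0 : w = 0
  · exact ⟨0, by ext u v; simp [hc, hw0]⟩
  obtain ⟨u₀, hu₀⟩ := Function.ne_iff.1 hw0
  refine ⟨c u₀ / w u₀, ?_⟩
  ext u v
  have hsymm : c v * w u₀ = c u₀ * w v := by
    rw [← hc, ← hc, ← transpose_apply B, hBt]
  rw [hc, smul_apply, vecMulVec_apply, smul_eq_mul, eq_div_of_mul_eq hu₀ hsymm]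
  ring

theorem exists_mem_spectrum_neg_of_trace_eq_zero (hA : A.IsHermitian) (htr : A.trace = 0)
    (hA0 : A ≠ 0) : ∃ μ ∈ spectrum ℝ A, μ < 0 := by
  by_contra! hnonneg
  have hsum : ∑ i, hA.eigenvalues i = 0 := by simpa [hA.trace_eq_sum_eigenvalues] using htr
  have hzero := (Finset.sum_eq_zero_iff_of_nonneg fun i _ =>
    hnonneg _ (hA.eigenvalues_mem_spectrum_real i)).1 hsum
  exact hA0 (hA.eigenvalues_eq_zero_iff.1 (funext fun i => hzero i (Finset.mem_univ i)))

theorem two_lt_card_of_mem_spectrum (hA : A.IsHermitian) {a b c : ℝ} (ha : a ∈ spectrum ℝ A)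
    (hb : b ∈ spectrum ℝ A) (hc : c ∈ spectrum ℝ A) (hab : a ≠ b) (hac : a ≠ c) (hbc : b ≠ c) :
    2 < Fintype.card n := by
  rw [hA.spectrum_real_eq_range_eigenvalues] at ha hb hc
  obtain ⟨i, rfl⟩ := ha
  obtain ⟨j, rfl⟩ := hb
  obtain ⟨k, rfl⟩ := hc
  exact Fintype.two_lt_card_iff.2
    ⟨i, j, k, ne_of_apply_ne _ hab, ne_of_apply_ne _ hac, ne_of_apply_ne _ hbc⟩

end IsHermitian

end Matrix

theorem eq_of_sq_add_sq_sub_mul_eq {x y z K : ℝ} (hx : 0 < x) (hy : 0 < y)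
    (hxy : x ^ 2 + y ^ 2 - x * y = K) (hyz : y ^ 2 + z ^ 2 - y * z = K)
    (hxz : x ^ 2 + z ^ 2 - x * z = K) : x = y := by
  have h₁ : (y - x) * (x + y - z) = 0 := by linear_combination hyz - hxz
  have h₂ : (x - z) * (x + z - y) = 0 := by linear_combination hxy - hyz
  rcases mul_eq_zero.1 h₁ with h | h
  · linarith
  · rcases mul_eq_zero.1 h₂ with h' | h' <;> linarith

namespace SimpleGraph

variable {V : Type*} {G : SimpleGraph V}

theorem exists_adj_iff_of_cliqueFree_three [DecidableEq V] [Nonempty V]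
    (htwin : ∀ u v, ¬G.Adj u v → ∀ t, G.Adj u t ↔ G.Adj v t) (hG : G.CliqueFree 3) :
    ∃ s : Set V, ∀ u v, G.Adj u v ↔ ¬(u ∈ s ↔ v ∈ s) := by
  obtain ⟨v₀⟩ := ‹Nonempty V›
  refine ⟨{x | G.Adj v₀ x}, fun u v => ?_⟩
  show G.Adj u v ↔ ¬(G.Adj v₀ u ↔ G.Adj v₀ v)
  constructor
  · intro huv hiff
    by_cases hu : G.Adj v₀ u
    · exact hG {v₀, u, v} (is3Clique_triple_iff.2 ⟨hu, hiff.1 hu, huv⟩)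
    · exact hu (hiff.2 ((htwin v₀ u hu v).2 huv))
  · intro hne
    by_contra huv
    exact hne (by simpa [G.adj_comm v₀] using htwin u v huv v₀)

def orthPair [DecidableEq V] (α : V → ℝ) (u v : V) : V → ℝ :=
  α v • Pi.single u 1 - α u • Pi.single v 1

theorem orthPair_apply_left [DecidableEq V] {α : V → ℝ} {u v : V} (huv : u ≠ v) :
    orthPair α u v u = α v := by
  simp [orthPair, huv]

variable [DecidableRel G.Adj]

theorem adjMatrix_nonneg (u v : V) : 0 ≤ G.adjMatrix ℝ u v := by
  rw [adjMatrix_apply]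
  split_ifs <;> norm_num

variable [Fintype V]

section TwinsAndRankOneSquare

variable {α : V → ℝ} {θ : ℝ}
  (htwin : ∀ u v, ¬G.Adj u v → ∀ t, G.Adj u t ↔ G.Adj v t)
  (hB : ∀ u v, (G.adjMatrix ℝ * G.adjMatrix ℝ) u v - θ * G.adjMatrix ℝ u v = α u * α v)
include hB

theorem degree_eq_sq (u : V) : (G.degree u : ℝ) = α u ^ 2 := by
  have := hB u u
  rwa [adjMatrix_mul_self_apply_self, adjMatrix_apply, if_neg (G.irrefl), mul_zero, sub_zero,
    ← sq] at this

include htwin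

theorem sq_add_sq_sub_mul_eq_of_adj {u v : V} (h : G.Adj u v) :
    α u ^ 2 + α v ^ 2 - α u * α v = Fintype.card V + θ := by
  have hcover : ∀ t, G.adjMatrix ℝ u t * G.adjMatrix ℝ t v =
      (if G.Adj u t then 1 else 0) + (if G.Adj v t then 1 else 0) - 1 := by
    intro t
    by_cases hu : G.Adj u t
    · by_cases hv : G.Adj v t <;> simp [hu, hv, G.adj_comm t]
    · -- `t` is a twin of its non-neighbour `u`, so it is adjacent to `v`
      have hv : G.Adj v t := G.adj_symm ((htwin u t hu v).1 h)
      simp [hu, hv, G.adj_comm t]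
  have hsum : (G.adjMatrix ℝ * G.adjMatrix ℝ) u v =
      G.degree u + G.degree v - Fintype.card V := by
    simp only [mul_apply, hcover, Finset.sum_sub_distrib, Finset.sum_add_distrib,
      ← degree_eq_sum_if_adj, Finset.sum_const, Finset.card_univ, nsmul_eq_mul, mul_one]
  have := hB u v
  rw [hsum, degree_eq_sq hB, degree_eq_sq hB, adjMatrix_apply, if_pos h] at this
  linarith

theorem eq_of_adj_of_adj_of_adj (hα : ∀ v, 0 < α v) {a b c : V} (hab : G.Adj a b)
    (hbc : G.Adj b c) (hac : G.Adj a c) : α a = α b :=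
  eq_of_sq_add_sq_sub_mul_eq (hα a) (hα b) (sq_add_sq_sub_mul_eq_of_adj htwin hB hab)
    (sq_add_sq_sub_mul_eq_of_adj htwin hB hbc) (sq_add_sq_sub_mul_eq_of_adj htwin hB hac)

theorem eq_of_not_adj (hα : ∀ v, 0 < α v) {u v : V} (h : ¬G.Adj u v) : α u = α v := by
  have hdeg : (G.degree u : ℝ) = G.degree v := by simp_rw [degree_eq_sum_if_adj, htwin u v h]
  rw [degree_eq_sq hB, degree_eq_sq hB] at hdeg
  exact (pow_left_inj₀ (hα u).le (hα v).le two_ne_zero).1 hdeg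

theorem isRegularOfDegree_of_adj_of_adj_of_adj (hα : ∀ v, 0 < α v) {a b c : V}
    (hab : G.Adj a b) (hbc : G.Adj b c) (hac : G.Adj a c) : G.IsRegularOfDegree (G.degree a) := by
  have hall : ∀ v, α v = α a := fun v => by
    by_cases hva : G.Adj v a
    · by_cases hvb : G.Adj v b
      · exact (eq_of_adj_of_adj_of_adj htwin hB hα hva.symm hvb hab).symm
      · exact (eq_of_not_adj htwin hB hα hvb).trans
          (eq_of_adj_of_adj_of_adj htwin hB hα hab hbc hac).symm
    · exact eq_of_not_adj htwin hB hα hva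
  intro v
  have : (G.degree v : ℝ) = G.degree a := by rw [degree_eq_sq hB, degree_eq_sq hB, hall]
  exact_mod_cast this

end TwinsAndRankOneSquare

theorem eq_zero_of_nonneg_of_mulVec_eq_smul {θ : ℝ} (hc : G.Connected) {y : V → ℝ} (hy : 0 ≤ y)
    (hAy : G.adjMatrix ℝ *ᵥ y = θ • y) {u : V} (hu : y u = 0) : y = 0 := by
  have hstep : ∀ a b, G.Adj a b → y a = 0 → y b = 0 := by
    intro a b hab ha
    have h := congrFun hAy a
    rw [adjMatrix_mulVec_apply, Pi.smul_apply, ha, smul_zero] at h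
    exact (Finset.sum_eq_zero_iff_of_nonneg fun t _ => hy t).1 h b (by simpa using hab)
  funext v
  obtain ⟨p⟩ := hc.preconnected u v
  induction p with
  | nil => exact hu
  | cons h _ ih => exact ih (hstep _ _ h hu)

variable [DecidableEq V]

theorem setOf_mem_adjSpectrum : {μ : ℝ | μ ∈ adjSpectrum G} = spectrum ℝ (G.adjMatrix ℝ) := by
  have : adjCharpoly G = (G.adjMatrix ℝ).charpoly := by unfold adjCharpoly; congr!
  ext μ
  change μ ∈ (adjCharpoly G).roots ↔ _
  rw [this, mem_roots (charpoly_monic _).ne_zero,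
    mem_spectrum_iff_isRoot_charpoly]

theorem isRegularOfDegree_of_forall_adj (h : ∀ u v, u ≠ v → G.Adj u v) :
    G.IsRegularOfDegree (Fintype.card V - 1) := by
  intro v
  have hN : G.neighborFinset v = Finset.univ.erase v := by
    ext t
    simpa [ne_comm] using ⟨G.ne_of_adj, h v t⟩
  rw [← card_neighborFinset_eq_degree, hN, Finset.card_erase_of_mem (Finset.mem_univ v),
    Finset.card_univ]

theorem zero_mem_spectrum_adjMatrix_of_twins {u v : V} (huv : u ≠ v)
    (h : ∀ t, G.Adj u t ↔ G.Adj v t) : (0 : ℝ) ∈ spectrum ℝ (G.adjMatrix ℝ) := by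
  refine mem_spectrum_iff_exists_mulVec_eq_smul.2 ⟨Pi.single u 1 - Pi.single v 1, fun h0 => ?_, ?_⟩
  · simpa [huv] using congrFun h0 u
  · ext t
    simp [G.adj_comm t, h]

section Perron

variable {θ : ℝ}

theorem adjMatrix_mulVec_abs_eq_smul (hmax : ∀ μ ∈ spectrum ℝ (G.adjMatrix ℝ), μ ≤ θ)
    {x : V → ℝ} (hx : G.adjMatrix ℝ *ᵥ x = θ • x) : G.adjMatrix ℝ *ᵥ |x| = θ • |x| := by
  have hA := G.isHermitian_adjMatrix ℝ
  have htop : ∀ z : V → ℝ, ∀ (μ : ℝ) (y : V → ℝ),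
      G.adjMatrix ℝ *ᵥ y = μ • y → θ < μ → y ⬝ᵥ z = 0 := by
    intro z μ y hy hμ
    by_contra h
    refine (hmax μ (mem_spectrum_iff_exists_mulVec_eq_smul.2 ⟨y, ?_, hy⟩)).not_gt hμ
    rintro rfl
    exact h (zero_dotProduct z)
  have hxx : |x| ⬝ᵥ |x| = x ⬝ᵥ x := by simp [dotProduct, abs_mul_abs_self]
  have hle : x ⬝ᵥ G.adjMatrix ℝ *ᵥ x ≤ |x| ⬝ᵥ G.adjMatrix ℝ *ᵥ |x| := by
    simp only [dotProduct, mulVec, Finset.mul_sum, Pi.abs_apply]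
    refine Finset.sum_le_sum fun u _ => Finset.sum_le_sum fun v _ => ?_
    calc x u * (G.adjMatrix ℝ u v * x v) ≤ |x u * (G.adjMatrix ℝ u v * x v)| := le_abs_self _
      _ = |x u| * (G.adjMatrix ℝ u v * |x v|) := by
        rw [abs_mul, abs_mul, abs_of_nonneg (adjMatrix_nonneg u v)]
  refine hA.mulVec_eq_smul_of_dotProduct_mulVec_eq (htop _)
    (le_antisymm (hA.dotProduct_mulVec_le (htop _)) ?_)
  calc θ * (|x| ⬝ᵥ |x|) = x ⬝ᵥ G.adjMatrix ℝ *ᵥ x := by rw [hxx, hx, dotProduct_smul, smul_eq_mul]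
    _ ≤ _ := hle

theorem Connected.exists_isPerronVector (hc : G.Connected)
    (hθ : θ ∈ spectrum ℝ (G.adjMatrix ℝ)) (hmax : ∀ μ ∈ spectrum ℝ (G.adjMatrix ℝ), μ ≤ θ) :
    ∃ w, IsPerronVector (G.adjMatrix ℝ) θ w := by
  obtain ⟨x₀, hx₀, hAx₀⟩ := mem_spectrum_iff_exists_mulVec_eq_smul.1 hθ
  have habs : ∀ x : V → ℝ, G.adjMatrix ℝ *ᵥ x = θ • x → G.adjMatrix ℝ *ᵥ |x| = θ • |x| :=
    fun _ => adjMatrix_mulVec_abs_eq_smul hmax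
  have hpos : ∀ v, 0 < |x₀| v := fun v =>
    (abs_nonneg (x₀ v)).lt_of_ne' fun h => hx₀ <| by
      simpa [funext_iff] using
        eq_zero_of_nonneg_of_mulVec_eq_smul hc (abs_nonneg x₀) (habs _ hAx₀) h
  refine ⟨|x₀|, hpos, habs _ hAx₀, fun x hx => ?_⟩
  obtain ⟨u⟩ := hc.nonempty
  refine ⟨x u / |x₀| u, sub_eq_zero.1 ?_⟩
  set z := x - (x u / |x₀| u) • |x₀|
  have hz : G.adjMatrix ℝ *ᵥ z = θ • z := by
    rw [mulVec_sub, mulVec_smul, hx, habs _ hAx₀, smul_sub, smul_comm]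
  have hu : |x₀ u| ≠ 0 := (hpos u).ne'
  have hzu : |z| u = 0 := by simp [z, div_mul_cancel₀ _ hu]
  simpa [funext_iff] using eq_zero_of_nonneg_of_mulVec_eq_smul hc (abs_nonneg z) (habs _ hz) hzu

theorem Connected.exists_pos_mul_self_sub_eq (hc : G.Connected) [Nontrivial V] {θ γ : ℝ}
    {w : V → ℝ} (hw : ∀ v, 0 < w v)
    (hγ : G.adjMatrix ℝ * (G.adjMatrix ℝ - θ • 1) = γ • vecMulVec w w) :
    ∃ α : V → ℝ, (∀ v, 0 < α v) ∧ ∀ u v,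
      (G.adjMatrix ℝ * G.adjMatrix ℝ) u v - θ * G.adjMatrix ℝ u v = α u * α v := by
  have hentry : ∀ u v,
      (G.adjMatrix ℝ * G.adjMatrix ℝ) u v - θ * G.adjMatrix ℝ u v = γ * (w u * w v) := by
    intro u v
    have := congrFun (congrFun hγ u) v
    rwa [mul_sub, mul_smul_comm, mul_one, Matrix.sub_apply, Matrix.smul_apply, Matrix.smul_apply,
      vecMulVec_apply, smul_eq_mul, smul_eq_mul] at this
  have hγpos : 0 < γ := by
    obtain ⟨u⟩ := hc.nonempty
    have hdeg : (0 : ℝ) < G.degree u := by exact_mod_cast hc.preconnected.degree_pos_of_nontrivial u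
    have := hentry u u
    rw [adjMatrix_mul_self_apply_self, adjMatrix_apply, if_neg (G.irrefl), mul_zero,
      sub_zero] at this
    have := mul_pos (hw u) (hw u)
    nlinarith
  refine ⟨√γ • w, fun v => mul_pos (sqrt_pos.2 hγpos) (hw v), fun u v => ?_⟩
  rw [hentry, Pi.smul_apply, Pi.smul_apply, smul_eq_mul, smul_eq_mul,
    mul_mul_mul_comm, mul_self_sqrt hγpos.le]

end Perron

section OrthPair

variable {α : V → ℝ} {u v : V}

theorem orthPair_dotProduct (y : V → ℝ) : orthPair α u v ⬝ᵥ y = α v * y u - α u * y v := by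
  simp [orthPair, sub_dotProduct]

theorem dotProduct_orthPair (α : V → ℝ) (u v : V) : α ⬝ᵥ orthPair α u v = 0 := by
  rw [dotProduct_comm, orthPair_dotProduct]
  ring

theorem adjMatrix_mulVec_orthPair_apply (t : V) :
    (G.adjMatrix ℝ *ᵥ orthPair α u v) t = α v * G.adjMatrix ℝ t u - α u * G.adjMatrix ℝ t v := by
  simp only [orthPair, mulVec_sub, mulVec_smul, mulVec_single_one, Pi.sub_apply, Pi.smul_apply,
    col_apply, smul_eq_mul]

theorem orthPair_dotProduct_adjMatrix_mulVec (h : ¬G.Adj u v) :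
    orthPair α u v ⬝ᵥ G.adjMatrix ℝ *ᵥ orthPair α u v = 0 := by
  rw [orthPair_dotProduct, adjMatrix_mulVec_orthPair_apply, adjMatrix_mulVec_orthPair_apply]
  simp [h, G.adj_comm v u]

theorem adj_of_forall_dotProduct_mulVec_le (hα : ∀ v, 0 < α v) {θ : ℝ} (hθ : θ < 0)
    (hq : ∀ x, α ⬝ᵥ x = 0 → x ⬝ᵥ G.adjMatrix ℝ *ᵥ x ≤ θ * (x ⬝ᵥ x)) (huv : u ≠ v) :
    G.Adj u v := by
  by_contra h
  have hx : orthPair α u v ≠ 0 := fun h0 => (hα v).ne' <| by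
    rw [← orthPair_apply_left (α := α) huv, h0, Pi.zero_apply]
  have hxx : 0 < orthPair α u v ⬝ᵥ orthPair α u v :=
    (Finset.sum_nonneg fun i _ => mul_self_nonneg _).lt_of_ne' (dotProduct_self_eq_zero.not.2 hx)
  have := hq _ (dotProduct_orthPair α u v)
  rw [orthPair_dotProduct_adjMatrix_mulVec h] at this
  nlinarith

theorem adj_iff_adj_of_not_adj (hα : ∀ v, 0 < α v)
    (hker : ∀ x, α ⬝ᵥ x = 0 → x ⬝ᵥ G.adjMatrix ℝ *ᵥ x = 0 → G.adjMatrix ℝ *ᵥ x = 0)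
    (h : ¬G.Adj u v) (t : V) : G.Adj u t ↔ G.Adj v t := by
  have ht := congrFun (hker _ (dotProduct_orthPair α u v)
    (orthPair_dotProduct_adjMatrix_mulVec h)) t
  rw [adjMatrix_mulVec_orthPair_apply, Pi.zero_apply, sub_eq_zero] at ht
  have := hα u
  have := hα v
  by_cases hu : G.Adj u t <;> by_cases hv : G.Adj v t <;>
    simp_all [adjMatrix_apply, G.adj_comm t]

end OrthPair

section ThreeEigenvalues

variable {θ₀ θ₁ θ₂ : ℝ}

theorem two_lt_card_of_spectrum_eq (h01 : θ₁ < θ₀) (h12 : θ₂ < θ₁)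
    (hspec : spectrum ℝ (G.adjMatrix ℝ) = {θ₀, θ₁, θ₂}) : 2 < Fintype.card V :=
  (G.isHermitian_adjMatrix ℝ).two_lt_card_of_mem_spectrum (by simp [hspec]) (by simp [hspec])
    (by simp [hspec]) h01.ne' (h12.trans h01).ne' h12.ne'

theorem exists_isPerronVector_of_spectrum_eq (hc : G.Connected) (h01 : θ₁ < θ₀)
    (h12 : θ₂ < θ₁) (hspec : spectrum ℝ (G.adjMatrix ℝ) = {θ₀, θ₁, θ₂}) :
    ∃ w, IsPerronVector (G.adjMatrix ℝ) θ₀ w ∧ ∀ x, w ⬝ᵥ x = 0 →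
      ∀ (μ : ℝ) (y : V → ℝ), G.adjMatrix ℝ *ᵥ y = μ • y → θ₁ < μ → y ⬝ᵥ x = 0 := by
  have hmem : ∀ μ ∈ spectrum ℝ (G.adjMatrix ℝ), μ = θ₀ ∨ μ = θ₁ ∨ μ = θ₂ := fun μ hμ => by
    rwa [hspec] at hμ
  obtain ⟨w, hw⟩ := hc.exists_isPerronVector (θ := θ₀) (by simp [hspec]) fun μ hμ => by
    rcases hmem μ hμ with rfl | rfl | rfl <;> linarith
  refine ⟨w, hw, fun x hx _ _ =>
    dotProduct_eq_zero_of_mulVec_eq_smul (fun ν hν hlt => ?_) hw.exists_eq_smul hx⟩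
  rcases hmem ν hν with h | rfl | rfl
  exacts [h, absurd hlt (lt_irrefl _), absurd hlt (lt_asymm h12)]

theorem middle_eigenvalue_nonneg (hc : G.Connected) (hnreg : ¬∃ d : ℕ, G.IsRegularOfDegree d)
    (h01 : θ₁ < θ₀) (h12 : θ₂ < θ₁) (hspec : spectrum ℝ (G.adjMatrix ℝ) = {θ₀, θ₁, θ₂}) :
    0 ≤ θ₁ := by
  obtain ⟨w, hw, horth⟩ := exists_isPerronVector_of_spectrum_eq hc h01 h12 hspec
  by_contra! hneg
  exact hnreg ⟨_, isRegularOfDegree_of_forall_adj fun u v =>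
    adj_of_forall_dotProduct_mulVec_le hw.pos hneg fun x hx =>
      (G.isHermitian_adjMatrix ℝ).dotProduct_mulVec_le (horth x hx)⟩

theorem exists_adj_iff_of_middle_eigenvalue_eq_zero (hc : G.Connected)
    (hnreg : ¬∃ d : ℕ, G.IsRegularOfDegree d) (h0 : 0 < θ₀) (h2 : θ₂ < 0)
    (hspec : spectrum ℝ (G.adjMatrix ℝ) = {θ₀, 0, θ₂}) :
    ∃ s : Set V, ∀ u v, G.Adj u v ↔ ¬(u ∈ s ↔ v ∈ s) := by
  have hA := G.isHermitian_adjMatrix ℝ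
  obtain ⟨w, hw, horth⟩ := exists_isPerronVector_of_spectrum_eq hc h0 h2 hspec
  have : Nontrivial V := Fintype.one_lt_card_iff_nontrivial.1
    (by have := two_lt_card_of_spectrum_eq h0 h2 hspec; omega)
  have htwin : ∀ u v, ¬G.Adj u v → ∀ t, G.Adj u t ↔ G.Adj v t := fun _ _ =>
    adj_iff_adj_of_not_adj hw.pos fun x hx hq => by
      simpa using hA.mulVec_eq_smul_of_dotProduct_mulVec_eq (horth x hx) (by simpa using hq)
  obtain ⟨γ, hγ⟩ := hA.exists_sub_mul_sub_eq_smul_vecMulVec hspec.subset hw.exists_eq_smul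
  rw [zero_smul, sub_zero] at hγ
  obtain ⟨α, hα, hB⟩ := hc.exists_pos_mul_self_sub_eq hw.pos hγ
  refine exists_adj_iff_of_cliqueFree_three htwin fun t ht => hnreg ?_
  obtain ⟨a, b, c, hab, hac, hbc, -⟩ := is3Clique_iff.1 ht
  exact ⟨_, isRegularOfDegree_of_adj_of_adj_of_adj htwin hB hα hab hbc hac⟩

theorem middle_eigenvalue_eq_zero_of_adj_iff (h01 : θ₁ < θ₀) (h12 : θ₂ < θ₁)
    (hspec : spectrum ℝ (G.adjMatrix ℝ) = {θ₀, θ₁, θ₂}) (hθ₁ : 0 ≤ θ₁) {s : Set V}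
    (hs : ∀ u v, G.Adj u v ↔ ¬(u ∈ s ↔ v ∈ s)) : θ₁ = 0 := by
  obtain ⟨u, v, huv, hside⟩ := Fintype.exists_ne_map_eq_of_card_lt (· ∈ s)
    (by simpa using two_lt_card_of_spectrum_eq h01 h12 hspec)
  have h0 := zero_mem_spectrum_adjMatrix_of_twins huv fun t => by rw [hs, hs, hside]
  have : Nonempty V := ⟨u⟩
  obtain ⟨μ, hμ, hneg⟩ := (G.isHermitian_adjMatrix ℝ).exists_mem_spectrum_neg_of_trace_eq_zero
    (G.trace_adjMatrix ℝ) fun hA0 => by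
      have h₀ : θ₀ ∈ spectrum ℝ (G.adjMatrix ℝ) := by simp [hspec]
      have h₂ : θ₂ ∈ spectrum ℝ (G.adjMatrix ℝ) := by simp [hspec]
      rw [hA0, spectrum.zero_eq, Set.mem_singleton_iff] at h₀ h₂
      linarith
  simp only [hspec, Set.mem_insert_iff, Set.mem_singleton_iff] at hμ h0
  rcases hμ with rfl | rfl | rfl <;> rcases h0 with h | h | h <;> linarith

end ThreeEigenvalues

end SimpleGraph

/-- For a connected non-regular graph with exactly three distinct adjacency eigenvalues
`θ₀ > θ₁ > θ₂`, we have `θ₁ ≥ 0`, with equality iff the graph is complete bipartite. -/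
theorem three_eigenvalues_middle_nonneg {V : Type*} [Fintype V]
    (G : SimpleGraph V) [DecidableRel G.Adj] (θ₀ θ₁ θ₂ : ℝ) (hc : G.Connected)
    (hnreg : ¬ ∃ d : ℕ, G.IsRegularOfDegree d)
    (h01 : θ₀ > θ₁) (h12 : θ₁ > θ₂)
    (hspec : {x : ℝ | x ∈ adjSpectrum G} = {θ₀, θ₁, θ₂}) :
    0 ≤ θ₁ ∧ (θ₁ = 0 ↔ ∃ s : Set V, ∀ u v : V, G.Adj u v ↔ ¬ (u ∈ s ↔ v ∈ s)) := by
  classical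
  rw [setOf_mem_adjSpectrum] at hspec
  have hθ₁ := middle_eigenvalue_nonneg hc hnreg h01 h12 hspec
  refine ⟨hθ₁, fun h0 => ?_, fun ⟨_, hs⟩ =>
    middle_eigenvalue_eq_zero_of_adj_iff h01 h12 hspec hθ₁ hs⟩
  subst h0
  exact exists_adj_iff_of_middle_eigenvalue_eq_zero hc hnreg h01 h12 hspec
end
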